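/- arXiv:2104.00907 — 2 statements merged into one kernel-verified Lean document; each statement's English description precedes it below -/
import Mathlib

section
/- Let n ≥ 4 be an even integer and let c be a real number with 0 < c ≤ 1 − 4/(n+1)². Then the set { √(1+cz) : z ∈ 𝔻 } is contained in Ω_{nL} = φ_{nL}(𝔻). (Consequently S*(√(1+cz)) ⊂ S*_{nL}.) -/
open Complex Metric Set

/-!
Since `|w - 1| = |t - 1| |t + 1|` for `t = √w` and `Re t ≥ √(1 - c)` when `|w - 1| < c`,
the values `√(1 + cz)` lie in the disk `|t - 1| < 1 - √(1 - c) ≤ (n - 1)/(n + 1)`.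
On the unit circle `|φ_{nL} - 1| ≥ (n - 1)/(n + 1)`, so by the open mapping theorem and a
connectedness argument this disk lies in `φ_{nL}(𝔻)`.
-/

/-- The function φ_{nL}(z) = 1 + n z/(n+1) + z^n/(n+1). -/
noncomputable def phinL (n : ℕ) (z : ℂ) : ℂ :=
  1 + (n : ℂ) * z / ((n : ℂ) + 1) + z ^ n / ((n : ℂ) + 1)

/-- Ω_{nL} = φ_{nL}(𝔻), the image of the open unit disk. -/
def OmeganL (n : ℕ) : Set ℂ := phinL n '' ball (0 : ℂ) 1

/-- f is analytic on the unit disk with f(0) = 0 and f'(0) = 1. -/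
def IsNormalizedAnalytic (f : ℂ → ℂ) : Prop :=
  AnalyticOnNhd ℂ f (ball (0 : ℂ) 1) ∧ f 0 = 0 ∧ deriv f 0 = 1

/-- p is subordinate to ψ on the unit disk. -/
def Subord (p ψ : ℂ → ℂ) : Prop :=
  ∃ ω : ℂ → ℂ, AnalyticOnNhd ℂ ω (ball (0 : ℂ) 1) ∧ ω 0 = 0 ∧
    (∀ z ∈ ball (0 : ℂ) 1, ω z ∈ ball (0 : ℂ) 1) ∧
    (∀ z ∈ ball (0 : ℂ) 1, p z = ψ (ω z))

/-- Membership in the class S*_{nL}. -/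
def MemSnL (n : ℕ) (f : ℂ → ℂ) : Prop :=
  IsNormalizedAnalytic f ∧ (∀ z ∈ ball (0 : ℂ) 1, z ≠ 0 → f z ≠ 0) ∧
  Subord (fun z => if z = 0 then 1 else z * deriv f z / f z) (phinL n)

theorem norm_cpow_inv_two_sub_one_le {w : ℂ} {s : ℝ} (hw : ‖w - 1‖ ≤ s) (hs : s ≤ 1) :
    ‖w ^ (2⁻¹ : ℂ) - 1‖ ≤ 1 - √(1 - s) := by
  set t := w ^ (2⁻¹ : ℂ)
  have hsq : t ^ 2 = w := cpow_ofNat_inv_pow w 2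
  have hw_re : 1 - s ≤ w.re := by
    have := (abs_le.mp ((abs_re_le_norm (w - 1)).trans hw)).1
    rw [sub_re, one_re] at this
    linarith
  have ht_re : √(1 - s) ≤ t.re := by
    rw [cpow_inv_two_re]
    exact Real.sqrt_le_sqrt (by linarith [re_le_norm w])
  have ht_add : 1 + √(1 - s) ≤ ‖t + 1‖ := by
    have := re_le_norm (t + 1)
    simp only [add_re, one_re] at this
    linarith
  have hfactor : ‖t - 1‖ * ‖t + 1‖ = ‖w - 1‖ := by
    rw [← norm_mul, ← hsq]
    ring_nf
  have hroot : √(1 - s) * √(1 - s) = 1 - s := Real.mul_self_sqrt (by linarith)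
  -- `‖t - 1‖ (1 + √(1 - s)) ≤ s = (1 - √(1 - s)) (1 + √(1 - s))`
  nlinarith [Real.sqrt_nonneg (1 - s), norm_nonneg (t - 1)]

theorem ball_subset_image_ball_of_le_norm_sub {f : ℂ → ℂ} {z₀ : ℂ} {r ρ : ℝ}
    (hf : DiffContOnCl ℂ f (ball z₀ r)) (hr : 0 < r)
    (hsphere : ∀ z ∈ sphere z₀ r, ρ ≤ ‖f z - f z₀‖) :
    ball (f z₀) ρ ⊆ f '' ball z₀ r := by
  have hclosure : closure (f '' ball z₀ r) ⊆ f '' closedBall z₀ r :=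
    closure_minimal (image_mono ball_subset_closedBall)
      ((isCompact_closedBall z₀ r).image_of_continuousOn
        (closure_ball z₀ hr.ne' ▸ hf.continuousOn)).isClosed
  rcases le_or_gt ρ 0 with hρ | hρ
  · simp [ball_eq_empty.mpr hρ]
  rcases (hf.differentiableOn.analyticOnNhd isOpen_ball).is_constant_or_isOpen
      (convex_ball z₀ r).isPreconnected with ⟨w, hw⟩ | hopen
  · obtain ⟨z, hz⟩ : (sphere z₀ r).Nonempty := NormedSpace.sphere_nonempty.mpr hr.le
    have hz_cl : z ∈ closure (ball z₀ r) := closure_ball z₀ hr.ne' ▸ sphere_subset_closedBall hz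
    have himg : f '' ball z₀ r ⊆ {w} := by
      rintro _ ⟨x, hx, rfl⟩
      exact hw x hx
    have hfz : f z = w := by
      simpa using closure_mono himg
        (((hf.continuousOn z hz_cl).mono subset_closure).mem_closure_image hz_cl)
    have := hsphere z hz
    rw [hfz, hw z₀ (mem_ball_self hr), sub_self, norm_zero] at this
    linarith
  · -- the disk is connected and meets `closure (f '' ball z₀ r)` only inside `f '' ball z₀ r`
    refine (convex_ball (f z₀) ρ).isPreconnected.subset_of_closure_inter_subset
      (hopen _ subset_rfl isOpen_ball) ⟨f z₀, mem_ball_self hρ,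
        mem_image_of_mem f (mem_ball_self hr)⟩ ?_
    rintro _ ⟨hcl, hzρ⟩
    obtain ⟨z, hz, rfl⟩ := hclosure hcl
    rw [← ball_union_sphere] at hz
    rcases hz with hz | hz
    · exact mem_image_of_mem f hz
    · rw [mem_ball, dist_eq_norm] at hzρ
      exact absurd (hsphere z hz) hzρ.not_ge

theorem phinL_sub_one (n : ℕ) (z : ℂ) : phinL n z - 1 = (n * z + z ^ n) / (n + 1) := by
  unfold phinL
  ring

theorem phinL_zero {n : ℕ} (hn : n ≠ 0) : phinL n 0 = 1 := by
  simp [phinL, zero_pow hn]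

theorem differentiable_phinL (n : ℕ) : Differentiable ℂ (phinL n) := by
  unfold phinL
  fun_prop

theorem le_norm_phinL_sub_one {n : ℕ} {z : ℂ} (hz : ‖z‖ = 1) :
    ((n : ℝ) - 1) / (n + 1) ≤ ‖phinL n z - 1‖ := by
  have hden : ‖(n + 1 : ℂ)‖ = n + 1 := by exact_mod_cast Complex.norm_natCast (n + 1)
  rw [phinL_sub_one, norm_div, hden]
  gcongr
  calc (n : ℝ) - 1 = ‖(n : ℂ) * z‖ - ‖z ^ n‖ := by simp [hz]
    _ ≤ ‖n * z + z ^ n‖ := norm_sub_le_norm_add _ _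

theorem ball_one_subset_OmeganL {n : ℕ} (hn : n ≠ 0) :
    ball 1 (((n : ℝ) - 1) / (n + 1)) ⊆ OmeganL n := by
  rw [← phinL_zero hn]
  refine ball_subset_image_ball_of_le_norm_sub (differentiable_phinL n).diffContOnCl one_pos
    fun z hz => ?_
  rw [phinL_zero hn]
  exact le_norm_phinL_sub_one (mem_sphere_zero_iff_norm.mp hz)

theorem stmt6_general (n : ℕ) (hn : 4 ≤ n) (c : ℝ)
    (hc1 : 0 < c) (hc2 : c ≤ 1 - 4 / ((n : ℝ) + 1) ^ 2) :
    (fun z : ℂ => (1 + (c : ℂ) * z) ^ ((1 : ℂ) / 2)) '' ball (0 : ℂ) 1 ⊆ OmeganL n := by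
  rintro _ ⟨z, hz, rfl⟩
  refine ball_one_subset_OmeganL (by omega) ?_
  rw [mem_ball_zero_iff] at hz
  have hc : c ≤ 1 := by linarith [show 0 ≤ 4 / ((n : ℝ) + 1) ^ 2 by positivity]
  have hroot : 2 / ((n : ℝ) + 1) ≤ √(1 - c) :=
    Real.le_sqrt_of_sq_le (by rw [div_pow]; norm_num; linarith)
  have hcz : c * ‖z‖ < c := mul_lt_of_lt_one_right hc1 hz
  have hradius : ((n : ℝ) - 1) / (n + 1) = 1 - 2 / (n + 1) := by field_simp; ring
  rw [mem_ball, dist_eq_norm, one_div, hradius]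
  calc ‖(1 + (c : ℂ) * z) ^ (2⁻¹ : ℂ) - 1‖ ≤ 1 - √(1 - c * ‖z‖) :=
        norm_cpow_inv_two_sub_one_le (by simp [abs_of_pos hc1]) (by linarith)
    _ < 1 - √(1 - c) := by gcongr
    _ ≤ 1 - 2 / (n + 1) := by linarith

theorem stmt6 (n : ℕ) (hn : 4 ≤ n) (hne : Even n) (c : ℝ)
    (hc1 : 0 < c) (hc2 : c ≤ 1 - 4 / ((n : ℝ) + 1) ^ 2) :
    (fun z : ℂ => (1 + (c : ℂ) * z) ^ ((1 : ℂ) / 2)) '' ball (0 : ℂ) 1 ⊆ OmeganL n :=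
  stmt6_general n hn c hc1 hc2
end

section
/- Let n ≥ 4 be an even integer and let β > 1. Let f be a normalized analytic function on 𝔻 with f(z) ≠ 0 for all z ∈ 𝔻 \ {0}, and suppose Re( z f'(z)/f(z) ) < β for all z ∈ 𝔻 \ {0}. Then for every z with 0 < |z| < (n−1)/((2β−1)n + 2β − 3), one has z f'(z)/f(z) ∈ Ω_{nL}. (This is the S*_{nL}-radius of the class M(β).) -/
/-!
The function `p = z f'/f` extends analytically to `𝔻` with `p 0 = 1` and `Re p < β`. With
`a = β - 1`, the Cayley transform `(β - p - a)/(β - p + a)` maps `𝔻` into itself and fixes `0`,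
so Schwarz's lemma gives `|p z - 1| ≤ 2 (β - 1) |z| / (1 - |z|)`.

On the other side, `|φ_{nL} z - 1| ≥ (n - 1)/(n + 1)` on the unit circle, and `φ_{nL}` is open on
`𝔻` because its derivative `n (1 + z^{n-1})/(n + 1)` does not vanish there. A connectedness
argument then puts the whole disk `|w - 1| < (n - 1)/(n + 1)` inside `Ω_{nL}`. The radius is
exactly where the first bound drops below `(n - 1)/(n + 1)`.
-/

open Complex Metric Set

theorem IsPreconnected.subset_image_of_disjoint_image_diff {X Y : Type*} [TopologicalSpace X]
    [TopologicalSpace Y] [T2Space Y] {φ : X → Y} {K U : Set X} {B : Set Y}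
    (hB : IsPreconnected B) (hK : IsCompact K) (hφ : ContinuousOn φ K) (hUK : U ⊆ K)
    (hU : IsOpen (φ '' U)) (hBU : (B ∩ φ '' U).Nonempty) (hBK : Disjoint B (φ '' (K \ U))) :
    B ⊆ φ '' U := by
  refine hB.subset_left_of_subset_union hU (hK.image_of_continuousOn hφ).isClosed.isOpen_compl
    (disjoint_compl_right.mono_right (compl_subset_compl.mpr (image_mono hUK))) ?_ hBU
  intro x hx
  by_cases hxK : x ∈ φ '' K
  · obtain ⟨y, hyK, rfl⟩ := hxK
    by_cases hyU : y ∈ U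
    · exact Or.inl (mem_image_of_mem φ hyU)
    · exact (hBK.notMem_of_mem_left hx (mem_image_of_mem φ ⟨hyK, hyU⟩)).elim
  · exact Or.inr hxK

section OmeganL

variable {n : ℕ}

theorem continuous_phinL (n : ℕ) : Continuous (phinL n) := by
  unfold phinL
  fun_prop

theorem hasStrictDerivAt_phinL (n : ℕ) (z : ℂ) :
    HasStrictDerivAt (phinL n) ((n : ℂ) * (1 + z ^ (n - 1)) / ((n : ℂ) + 1)) z := by
  have hlin : HasStrictDerivAt (fun z : ℂ => (n : ℂ) * z / ((n : ℂ) + 1))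
      ((n : ℂ) / ((n : ℂ) + 1)) z := by
    simpa using ((hasStrictDerivAt_id z).const_mul (n : ℂ)).div_const ((n : ℂ) + 1)
  have hpow := (hasStrictDerivAt_pow n z).div_const ((n : ℂ) + 1)
  exact (((hasStrictDerivAt_const z (1 : ℂ)).add hlin).add hpow).congr_deriv (by ring)

theorem isOpen_OmeganL (hn : 2 ≤ n) : IsOpen (OmeganL n) := by
  rw [isOpen_iff_mem_nhds]
  rintro _ ⟨z, hz, rfl⟩
  have hzn : ‖z ^ (n - 1)‖ < 1 := by
    rw [norm_pow]
    exact pow_lt_one₀ (norm_nonneg z) (mem_ball_zero_iff.mp hz) (by omega)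
  have hderiv : (n : ℂ) * (1 + z ^ (n - 1)) / ((n : ℂ) + 1) ≠ 0 := by
    refine div_ne_zero (mul_ne_zero (Nat.cast_ne_zero.mpr (by omega)) fun h => ?_)
      (Nat.cast_add_one_ne_zero n)
    rw [← (add_eq_zero_iff_neg_eq.mp h), norm_neg, norm_one] at hzn
    exact lt_irrefl _ hzn
  rw [← (hasStrictDerivAt_phinL n z).map_nhds_eq hderiv]
  exact Filter.image_mem_map (isOpen_ball.mem_nhds hz)

theorem norm_phinL_sub_one_ge (n : ℕ) {z : ℂ} (hz : ‖z‖ = 1) :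
    ((n : ℝ) - 1) / ((n : ℝ) + 1) ≤ ‖phinL n z - 1‖ := by
  have hsub : phinL n z - 1 = ((n : ℂ) * z + z ^ n) / ((n : ℂ) + 1) := by
    unfold phinL
    ring
  have hden : ‖(n : ℂ) + 1‖ = (n : ℝ) + 1 := by exact_mod_cast Complex.norm_natCast (n + 1)
  have hnum : (n : ℝ) - 1 ≤ ‖(n : ℂ) * z + z ^ n‖ := by
    simpa [norm_mul, norm_pow, hz] using norm_sub_norm_le ((n : ℂ) * z) (-(z ^ n))
  rw [hsub, norm_div, hden]
  gcongr

theorem ball_subset_OmeganL (hn : 2 ≤ n) :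
    ball (1 : ℂ) (((n : ℝ) - 1) / ((n : ℝ) + 1)) ⊆ OmeganL n := by
  have hr : 0 < ((n : ℝ) - 1) / ((n : ℝ) + 1) := by
    have : (2 : ℝ) ≤ n := by exact_mod_cast hn
    apply div_pos <;> linarith
  refine (convex_ball _ _).isPreconnected.subset_image_of_disjoint_image_diff
    (isCompact_closedBall 0 1) (continuous_phinL n).continuousOn ball_subset_closedBall
    (isOpen_OmeganL hn) ⟨1, mem_ball_self hr, 0, mem_ball_self one_pos, ?_⟩ ?_
  · simp [phinL, zero_pow (by omega : n ≠ 0)]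
  · rw [Set.disjoint_right]
    rintro _ ⟨z, ⟨hz1, hz1'⟩, rfl⟩ hball
    have hz : ‖z‖ = 1 := by
      simp only [mem_closedBall_zero_iff, mem_ball_zero_iff, not_lt] at hz1 hz1'
      exact le_antisymm hz1 hz1'
    rw [mem_ball, dist_eq_norm] at hball
    exact not_lt_of_ge (norm_phinL_sub_one_ge n hz) hball

end OmeganL

theorem Complex.norm_sub_ofReal_lt_norm_add_ofReal {x : ℂ} {a : ℝ} (hx : 0 < x.re) (ha : 0 < a) :
    ‖x - a‖ < ‖x + a‖ := by
  rw [← sq_lt_sq₀ (norm_nonneg _) (norm_nonneg _), Complex.sq_norm, Complex.sq_norm,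
    normSq_apply, normSq_apply]
  simp only [sub_re, sub_im, add_re, add_im, ofReal_re, ofReal_im]
  nlinarith

theorem norm_sub_one_le_of_re_lt {p : ℂ → ℂ} {β : ℝ} (hp : DifferentiableOn ℂ p (ball 0 1))
    (hp0 : p 0 = 1) (hre : ∀ z ∈ ball (0 : ℂ) 1, (p z).re < β) {z : ℂ} (hz : z ∈ ball 0 1) :
    ‖p z - 1‖ ≤ 2 * (β - 1) * ‖z‖ / (1 - ‖z‖) := by
  set a := β - 1
  have ha : 0 < a := by simpa [hp0, a] using hre 0 (mem_ball_self one_pos)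
  set q : ℂ → ℂ := fun w => β - p w
  have hq : ∀ w ∈ ball (0 : ℂ) 1, ‖q w - a‖ < ‖q w + a‖ := fun w hw =>
    norm_sub_ofReal_lt_norm_add_ofReal (by simpa [q] using hre w hw) ha
  have hden : ∀ w ∈ ball (0 : ℂ) 1, q w + a ≠ 0 := fun w hw =>
    norm_pos_iff.mp ((norm_nonneg _).trans_lt (hq w hw))
  set ω : ℂ → ℂ := fun w => (q w - a) / (q w + a)
  have hω : DifferentiableOn ℂ ω (ball 0 1) :=
    (((differentiableOn_const _).sub hp).sub (differentiableOn_const _)).div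
      (((differentiableOn_const _).sub hp).add (differentiableOn_const _)) hden
  have hω0 : ω 0 = 0 := by simp [ω, q, a, hp0]
  have hωmaps : MapsTo ω (ball 0 1) (closedBall 0 1) := fun w hw => by
    rw [mem_closedBall_zero_iff, norm_div]
    exact div_le_one_of_le₀ (hq w hw).le (norm_nonneg _)
  have hschwarz : ‖ω z‖ ≤ ‖z‖ :=
    Complex.norm_le_norm_of_mapsTo_ball hω hωmaps hω0 (mem_ball_zero_iff.mp hz)
  have hinv : (p z - 1) * (1 - ω z) = -(2 * a * ω z) := by
    have := hden z hz
    simp only [ω, q, a] at this ⊢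
    field_simp
    push_cast
    ring
  have hz1 : 0 < 1 - ‖z‖ := by simpa using mem_ball_zero_iff.mp hz
  rw [le_div_iff₀ hz1]
  calc ‖p z - 1‖ * (1 - ‖z‖) ≤ ‖p z - 1‖ * ‖1 - ω z‖ := by
        gcongr
        calc 1 - ‖z‖ ≤ ‖(1 : ℂ)‖ - ‖ω z‖ := by rw [norm_one]; linarith
          _ ≤ ‖1 - ω z‖ := norm_sub_norm_le 1 (ω z)
    _ = 2 * a * ‖ω z‖ := by
        rw [← norm_mul, hinv, norm_neg, norm_mul, norm_mul, Complex.norm_real,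
          Real.norm_of_nonneg ha.le, Complex.norm_two]
    _ ≤ 2 * a * ‖z‖ := by gcongr

theorem IsNormalizedAnalytic.exists_differentiableOn_eq_mul_deriv_div {f : ℂ → ℂ}
    (hf : IsNormalizedAnalytic f) (hfz : ∀ z ∈ ball (0 : ℂ) 1, z ≠ 0 → f z ≠ 0) :
    ∃ p : ℂ → ℂ, DifferentiableOn ℂ p (ball 0 1) ∧ p 0 = 1 ∧
      ∀ z ∈ ball (0 : ℂ) 1, z ≠ 0 → z * deriv f z / f z = p z := by
  obtain ⟨hfa, hf0, hf'0⟩ := hf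
  set g := dslope f 0
  have hg : AnalyticOnNhd ℂ g (ball 0 1) :=
    ((differentiableOn_dslope (ball_mem_nhds 0 one_pos)).mpr hfa.differentiableOn).analyticOnNhd
      isOpen_ball
  have hfg : ∀ w, f w = w * g w := fun w => by
    simpa [hf0, smul_eq_mul] using (sub_smul_dslope f 0 w).symm
  have hg0 : g 0 = 1 := by simp [g, hf'0]
  have hgne : ∀ w ∈ ball (0 : ℂ) 1, g w ≠ 0 := fun w hw hgw => by
    rcases eq_or_ne w 0 with rfl | hw0
    · exact one_ne_zero (hg0.symm.trans hgw)
    · exact hfz w hw hw0 (by rw [hfg, hgw, mul_zero])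
  have hf' : ∀ w ∈ ball (0 : ℂ) 1, deriv f w = g w + w * deriv g w := fun w hw => by
    rw [funext hfg]
    exact ((hasDerivAt_id' w).mul (hg w hw).differentiableAt.hasDerivAt).deriv.trans (by ring)
  refine ⟨fun w => 1 + w * deriv g w / g w,
    (differentiableOn_const 1).add ((differentiableOn_id.mul hg.deriv.differentiableOn).div
      hg.differentiableOn hgne), by simp, fun w hw hw0 => ?_⟩
  rw [hf' w hw, hfg w]
  field_simp [hgne w hw]

theorem stmt11_general (n : ℕ) (hn : 4 ≤ n) (β : ℝ) (hβ : 1 < β)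
    (f : ℂ → ℂ) (hf : IsNormalizedAnalytic f)
    (hfz : ∀ z ∈ ball (0 : ℂ) 1, z ≠ 0 → f z ≠ 0)
    (hre : ∀ z ∈ ball (0 : ℂ) 1, z ≠ 0 → (z * deriv f z / f z).re < β) :
    ∀ z : ℂ, 0 < ‖z‖ →
      ‖z‖ < ((n : ℝ) - 1) / ((2 * β - 1) * (n : ℝ) + 2 * β - 3) →
      z * deriv f z / f z ∈ OmeganL n := by
  intro z hz0 hzr
  obtain ⟨p, hp, hp0, hfp⟩ := hf.exists_differentiableOn_eq_mul_deriv_div hfz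
  have hpre : ∀ w ∈ ball (0 : ℂ) 1, (p w).re < β := fun w hw => by
    rcases eq_or_ne w 0 with rfl | hw0
    · simpa [hp0] using hβ
    · exact hfp w hw hw0 ▸ hre w hw hw0
  have hn' : (4 : ℝ) ≤ n := by exact_mod_cast hn
  have hD : 0 < (2 * β - 1) * (n : ℝ) + 2 * β - 3 := by nlinarith
  rw [lt_div_iff₀ hD] at hzr
  have hz1 : ‖z‖ < 1 := by nlinarith
  have hz : z ∈ ball (0 : ℂ) 1 := mem_ball_zero_iff.mpr hz1
  have hradius : 2 * (β - 1) * ‖z‖ / (1 - ‖z‖) < ((n : ℝ) - 1) / ((n : ℝ) + 1) := by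
    rw [div_lt_div_iff₀ (by linarith) (by linarith)]
    nlinarith
  refine ball_subset_OmeganL (by omega) ?_
  rw [mem_ball, dist_eq_norm, hfp z hz (norm_pos_iff.mp hz0)]
  exact (norm_sub_one_le_of_re_lt hp hp0 hpre hz).trans_lt hradius

theorem stmt11 (n : ℕ) (hn : 4 ≤ n) (hne : Even n) (β : ℝ) (hβ : 1 < β)
    (f : ℂ → ℂ) (hf : IsNormalizedAnalytic f)
    (hfz : ∀ z ∈ ball (0 : ℂ) 1, z ≠ 0 → f z ≠ 0)
    (hre : ∀ z ∈ ball (0 : ℂ) 1, z ≠ 0 → (z * deriv f z / f z).re < β) :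
    ∀ z : ℂ, 0 < ‖z‖ →
      ‖z‖ < ((n : ℝ) - 1) / ((2 * β - 1) * (n : ℝ) + 2 * β - 3) →
      z * deriv f z / f z ∈ OmeganL n :=
  stmt11_general n hn β hβ f hf hfz hre
end
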